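/- Let q = (q_n)_{n=0}^∞ be a bounded sequence of positive integers, let c^{(n)} = (c^{(n)}_0,…,c^{(n)}_{q_n}) be positive integers with c^{(n)}_0 = c^{(n)}_{q_n} = d_res, let W^{(n)}_m ∈ ℝ^{c^{(n)}_m × c^{(n)}_{m−1}} and b^{(n)}_m ∈ ℝ^{c^{(n)}_m}, and fix activation matrices J^{(n)}_m ∈ 𝒟_{c^{(n)}_m}. Assume: (i) ∑_{k=0}^∞ ∑_{m=1}^{q_k} (∏_{m'=m+1}^{q_k} ‖W^{(k)}_{m'}‖) ‖b^{(k)}_m‖ < +∞; (ii) the tail infinite product ∏_{k=n}^{∞} (∏_{m=1}^{q_k} J^{(k)}_m W^{(k)}_m + J^{(k)}_{q_k}) converges for every n ∈ ℕ; (iii) there is a constant C₁ > 0 such that ∏_{k=n'}^{n} (∏_{m=1}^{q_k} ‖W^{(k)}_m‖ + 1) ≤ C₁ for all n' ≤ n. Then the limit lim_{n→∞} B_n = lim_{n→∞} ∑_{k=0}^{n} ∑_{m=1}^{q_k} [∏_{k'=k+1}^{n} (∏_{m'=1}^{q_{k'}} J^{(k')}_{m'} W^{(k')}_{m'} + J^{(k')}_{q_{k'}})]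 (∏_{m'=m+1}^{q_k} J^{(k)}_{m'} W^{(k)}_{m'}) J^{(k)}_m b^{(k)}_m exists in ℝ^{d_res}. -/

import Mathlib

open Filter Matrix Topology
open scoped ENNReal

noncomputable section

/-- The ReLU activation applied componentwise. -/
def relu {d : ℕ} (x : Fin d → ℝ) : Fin d → ℝ := fun i => max (x i) 0

/-- Cast a vector along an equality of dimensions. -/
def castVec {a b : ℕ} (h : a = b) (v : Fin a → ℝ) : Fin b → ℝ := fun i => v (Fin.cast h.symm i)

/-- Cast a matrix along equalities of its dimensions. -/
def mcast {a a' b b' : ℕ} (ha : a = a') (hb : b = b') (M : Matrix (Fin a) (Fin b) ℝ) :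
    Matrix (Fin a') (Fin b') ℝ :=
  M.submatrix (Fin.cast ha.symm) (Fin.cast hb.symm)

/-- Outputs of consecutive fully connected ReLU layers:
`hiddenSeq c W b m x = (σ(W m ⬝ · + b m) ∘ ⋯ ∘ σ(W 1 ⬝ · + b 1)) x` (0-based weight indices). -/
def hiddenSeq (c : ℕ → ℕ) (W : ∀ m, Matrix (Fin (c (m+1))) (Fin (c m)) ℝ)
    (b : ∀ m, Fin (c (m+1)) → ℝ) : (m : ℕ) → (Fin (c 0) → ℝ) → Fin (c m) → ℝ
  | 0 => fun x => x
  | m+1 => fun x => relu ((W m).mulVec (hiddenSeq c W b m x) + b m)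

/-- A residual block with `q` layers (`q ≥ 1`), shortcut connection added before the last ReLU. -/
def resBlock (d q : ℕ) (hq : 0 < q) (c : ℕ → ℕ) (hc0 : c 0 = d) (hcq : c q = d)
    (W : ∀ m, Matrix (Fin (c (m+1))) (Fin (c m)) ℝ)
    (b : ∀ m, Fin (c (m+1)) → ℝ) (x : Fin d → ℝ) : Fin d → ℝ :=
  castVec (show c (q-1+1) = d from (congrArg c (Nat.succ_pred_eq_of_pos hq)).trans hcq)
    (relu ((W (q-1)).mulVec (hiddenSeq c W b (q-1) (castVec hc0.symm x))
      + castVec (show c (q-1+1) = d from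
          (congrArg c (Nat.succ_pred_eq_of_pos hq)).trans hcq).symm x + b (q-1)))

/-- The deep network with shortcut connections: composition of residual blocks `0,…,n`. -/
def resNet (d : ℕ) (q : ℕ → ℕ) (hq : ∀ n, 0 < q n) (c : ℕ → ℕ → ℕ)
    (hc0 : ∀ n, c n 0 = d) (hcq : ∀ n, c n (q n) = d)
    (W : ∀ n m, Matrix (Fin (c n (m+1))) (Fin (c n m)) ℝ)
    (b : ∀ n m, Fin (c n (m+1)) → ℝ) :
    ℕ → (Fin d → ℝ) → Fin d → ℝ
  | 0 => resBlock d (q 0) (hq 0) (c 0) (hc0 0) (hcq 0) (W 0) (b 0)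
  | n+1 => fun x => resBlock d (q (n+1)) (hq (n+1)) (c (n+1)) (hc0 (n+1)) (hcq (n+1))
      (W (n+1)) (b (n+1)) (resNet d q hq c hc0 hcq W b n x)

/-- `J` is a 0/1 diagonal (activation) matrix. -/
def IsActivation {a : ℕ} (J : Matrix (Fin a) (Fin a) ℝ) : Prop :=
  (∀ i, J i i = 0 ∨ J i i = 1) ∧ ∀ i j, i ≠ j → J i j = 0

/-- The pre-activation vector `z` has exactly the sign pattern prescribed by the
activation matrix `J`: positive on the support of `J` and `≤ 0` off it. -/
def inPattern {a : ℕ} (J : Matrix (Fin a) (Fin a) ℝ) (z : Fin a → ℝ) : Prop :=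
  ∀ i, J i i = 1 ↔ 0 < z i

/-- `x` lies in the activation domain of a single residual block w.r.t. `J`. -/
def blockDomain (d q : ℕ) (hq : 0 < q) (c : ℕ → ℕ) (hc0 : c 0 = d) (hcq : c q = d)
    (W : ∀ m, Matrix (Fin (c (m+1))) (Fin (c m)) ℝ)
    (b : ∀ m, Fin (c (m+1)) → ℝ)
    (J : ∀ m, Matrix (Fin (c (m+1))) (Fin (c (m+1))) ℝ) (x : Fin d → ℝ) : Prop :=
  (∀ m, m + 1 < q →
    inPattern (J m) ((W m).mulVec (hiddenSeq c W b m (castVec hc0.symm x)) + b m)) ∧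
  inPattern (J (q-1)) ((W (q-1)).mulVec (hiddenSeq c W b (q-1) (castVec hc0.symm x))
    + castVec (show c (q-1+1) = d from
        (congrArg c (Nat.succ_pred_eq_of_pos hq)).trans hcq).symm x + b (q-1))

/-- The input fed to block `k` (output of the previous blocks; the input itself when `k = 0`). -/
def netInput (d : ℕ) (q : ℕ → ℕ) (hq : ∀ n, 0 < q n) (c : ℕ → ℕ → ℕ)
    (hc0 : ∀ n, c n 0 = d) (hcq : ∀ n, c n (q n) = d)
    (W : ∀ n m, Matrix (Fin (c n (m+1))) (Fin (c n m)) ℝ)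
    (b : ∀ n m, Fin (c n (m+1)) → ℝ) :
    ℕ → (Fin d → ℝ) → Fin d → ℝ
  | 0 => fun x => x
  | k+1 => resNet d q hq c hc0 hcq W b k

/-- Activation domain of the multi-residual-block network `𝒩_{c,q,n}` w.r.t. `J`:
`x ∈ [0,1]^d` and at each layer of each block the pre-activation has the pattern of `J`. -/
def InActDomain (d : ℕ) (q : ℕ → ℕ) (hq : ∀ n, 0 < q n) (c : ℕ → ℕ → ℕ)
    (hc0 : ∀ n, c n 0 = d) (hcq : ∀ n, c n (q n) = d)
    (W : ∀ n m, Matrix (Fin (c n (m+1))) (Fin (c n m)) ℝ)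
    (b : ∀ n m, Fin (c n (m+1)) → ℝ)
    (J : ∀ n m, Matrix (Fin (c n (m+1))) (Fin (c n (m+1))) ℝ)
    (n : ℕ) (x : Fin d → ℝ) : Prop :=
  (∀ i, x i ∈ Set.Icc (0:ℝ) 1) ∧
  ∀ k ≤ n, blockDomain d (q k) (hq k) (c k) (hc0 k) (hcq k) (W k) (b k) (J k)
    (netInput d q hq c hc0 hcq W b k x)

/-- `prodSeg f a n = f n * f (n-1) * ⋯ * f a` (the identity when `n < a`). -/
def prodSeg {α : Type*} [Monoid α] (f : ℕ → α) (a n : ℕ) : α :=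
  ((List.range' a (n + 1 - a)).reverse.map f).prod

/-- `innerProdFrom c W J a m = (J (a+m) W (a+m)) ⋯ (J (a+1) W (a+1)) (J a W a)`,
i.e. the product `∏_{m'=a+1}^{a+m} J_{m'} W_{m'}` in the 1-based indexing of the paper. -/
def innerProdFrom (c : ℕ → ℕ) (W : ∀ m, Matrix (Fin (c (m+1))) (Fin (c m)) ℝ)
    (J : ∀ m, Matrix (Fin (c (m+1))) (Fin (c (m+1))) ℝ) (a : ℕ) :
    (m : ℕ) → Matrix (Fin (c (a + m))) (Fin (c a)) ℝ
  | 0 => (1 : Matrix (Fin (c a)) (Fin (c a)) ℝ)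
  | m+1 => (J (a + m) * W (a + m)) * innerProdFrom c W J a m

/-- The matrix `∏_{m=1}^{q} J_m W_m + J_q` of a residual block. -/
def blockMat (d q : ℕ) (hq : 0 < q) (c : ℕ → ℕ) (hc0 : c 0 = d) (hcq : c q = d)
    (W : ∀ m, Matrix (Fin (c (m+1))) (Fin (c m)) ℝ)
    (J : ∀ m, Matrix (Fin (c (m+1))) (Fin (c (m+1))) ℝ) :
    Matrix (Fin d) (Fin d) ℝ :=
  mcast ((congrArg c (Nat.zero_add q)).trans hcq) hc0 (innerProdFrom c W J 0 q)
    + mcast (show c (q-1+1) = d from (congrArg c (Nat.succ_pred_eq_of_pos hq)).trans hcq)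
        (show c (q-1+1) = d from (congrArg c (Nat.succ_pred_eq_of_pos hq)).trans hcq) (J (q-1))

/-- `Aseq n = ∏_{k=0}^{n} (∏_{m=1}^{q_k} J^{(k)}_m W^{(k)}_m + J^{(k)}_{q_k})`. -/
def Aseq (d : ℕ) (q : ℕ → ℕ) (hq : ∀ n, 0 < q n) (c : ℕ → ℕ → ℕ)
    (hc0 : ∀ n, c n 0 = d) (hcq : ∀ n, c n (q n) = d)
    (W : ∀ n m, Matrix (Fin (c n (m+1))) (Fin (c n m)) ℝ)
    (J : ∀ n m, Matrix (Fin (c n (m+1))) (Fin (c n (m+1))) ℝ) (n : ℕ) :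
    Matrix (Fin d) (Fin d) ℝ :=
  prodSeg (fun k => blockMat d (q k) (hq k) (c k) (hc0 k) (hcq k) (W k) (J k)) 0 n

/-- `∑_{m=1}^{q} (∏_{m'=m+1}^{q} J_{m'} W_{m'}) J_m b_m` for one residual block. -/
def blockBias (d q : ℕ) (c : ℕ → ℕ) (hcq : c q = d)
    (W : ∀ m, Matrix (Fin (c (m+1))) (Fin (c m)) ℝ)
    (b : ∀ m, Fin (c (m+1)) → ℝ)
    (J : ∀ m, Matrix (Fin (c (m+1))) (Fin (c (m+1))) ℝ) : Fin d → ℝ :=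
  ∑ m ∈ (Finset.range q).attach,
    (mcast ((congrArg c (Nat.add_sub_cancel' (Finset.mem_range.mp m.2))).trans hcq) rfl
        (innerProdFrom c W J (m.1+1) (q - (m.1+1)))).mulVec ((J m.1).mulVec (b m.1))

/-- `Bseq n = ∑_{k=0}^{n} ∑_{m=1}^{q_k} [∏_{k'=k+1}^{n} (∏_{m'} J W + J)] (∏_{m'>m} J W) J_m b_m`. -/
def Bseq (d : ℕ) (q : ℕ → ℕ) (hq : ∀ n, 0 < q n) (c : ℕ → ℕ → ℕ)
    (hc0 : ∀ n, c n 0 = d) (hcq : ∀ n, c n (q n) = d)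
    (W : ∀ n m, Matrix (Fin (c n (m+1))) (Fin (c n m)) ℝ)
    (b : ∀ n m, Fin (c n (m+1)) → ℝ)
    (J : ∀ n m, Matrix (Fin (c n (m+1))) (Fin (c n (m+1))) ℝ) (n : ℕ) : Fin d → ℝ :=
  ∑ k ∈ Finset.range (n+1),
    (prodSeg (fun k' => blockMat d (q k') (hq k') (c k') (hc0 k') (hcq k') (W k') (J k'))
        (k+1) n).mulVec
      (blockBias d (q k) (c k) (hcq k) (W k) (b k) (J k))

/-- A family of norms on the spaces `ℝ^m` which is monotone in the sense of the paper. -/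
structure NormFamily where
  N : ∀ m : ℕ, (Fin m → ℝ) → ℝ
  eq_zero_iff : ∀ (m : ℕ) (x : Fin m → ℝ), N m x = 0 ↔ x = 0
  add_le : ∀ (m : ℕ) (x y : Fin m → ℝ), N m (x + y) ≤ N m x + N m y
  smul_eq : ∀ (m : ℕ) (r : ℝ) (x : Fin m → ℝ), N m (r • x) = |r| * N m x
  mono : ∀ (m : ℕ) (x y : Fin m → ℝ), (∀ i, |x i| ≤ |y i|) → N m x ≤ N m y

/-- The operator (matrix) norm induced by a family of vector norms. -/
def NormFamily.op (F : NormFamily) {a b : ℕ} (M : Matrix (Fin a) (Fin b) ℝ) : ℝ :=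
  sSup ((fun x => F.N a (M.mulVec x) / F.N b x) '' {x : Fin b → ℝ | x ≠ 0})

/-- 1-D Toeplitz convolution-with-zero-padding matrix of a filter mask `u ∈ ℝ^{2f+1}`:
`(T1 f d u) a b = u (f - b + a)` when `-f ≤ b - a ≤ f` and `0` otherwise. -/
def T1 (f d : ℕ) (u : Fin (2*f+1) → ℝ) : Matrix (Fin d) (Fin d) ℝ :=
  fun a b =>
    if h : -(f:ℤ) ≤ ((b:ℕ):ℤ) - ((a:ℕ):ℤ) ∧ ((b:ℕ):ℤ) - ((a:ℕ):ℤ) ≤ (f:ℤ) then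
      u ⟨((f:ℤ) - ((b:ℕ):ℤ) + ((a:ℕ):ℤ)).toNat, by omega⟩
    else 0

/-- 2-D block Toeplitz convolution matrix of a mask `v ∈ ℝ^{(2f+1)×(2f+1)}`:
the `(a,b)` block is `T1 f d (v (f - b + a))` when `-f ≤ b - a ≤ f` and `0` otherwise. -/
def T2 (f d : ℕ) (v : Fin (2*f+1) → Fin (2*f+1) → ℝ) :
    Matrix (Fin d × Fin d) (Fin d × Fin d) ℝ :=
  fun P Q =>
    if h : -(f:ℤ) ≤ ((Q.1:ℕ):ℤ) - ((P.1:ℕ):ℤ) ∧ ((Q.1:ℕ):ℤ) - ((P.1:ℕ):ℤ) ≤ (f:ℤ) then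
      T1 f d (v ⟨((f:ℤ) - ((Q.1:ℕ):ℤ) + ((P.1:ℕ):ℤ)).toNat, by omega⟩) P.2 Q.2
    else 0

/-- The block matrix `T(w)` of a multi-channel convolution
with `cin` input channels and `cout` output channels: the `(i,j)` block is `T2 f d (w i j)`. -/
def Tmulti (f d cin cout : ℕ)
    (w : Fin cout → Fin cin → Fin (2*f+1) → Fin (2*f+1) → ℝ) :
    Matrix (Fin cout × Fin d × Fin d) (Fin cin × Fin d × Fin d) ℝ :=
  fun P Q => T2 f d (w P.1 Q.1) P.2 Q.2

/-- Multi-channel 2-D convolution with zero padding, as matrix-vector multiplication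
by the Toeplitz-type matrices `T2`. -/
def convLayer (f d cin cout : ℕ)
    (w : Fin cout → Fin cin → Fin (2*f+1) → Fin (2*f+1) → ℝ)
    (x : Fin cin → Fin d → Fin d → ℝ) : Fin cout → Fin d → Fin d → ℝ :=
  fun i a b => ∑ j, ∑ s, ∑ t, T2 f d (w i j) (a, b) (s, t) * x j s t

/-- Cast the channel index of a tensor along an equality of channel numbers. -/
def castChan {d a b : ℕ} (h : a = b) (x : Fin a → Fin d → Fin d → ℝ) :
    Fin b → Fin d → Fin d → ℝ :=
  fun i => x (Fin.cast h.symm i)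

/-- Hidden layers of a convolutional residual block (with constant-per-channel biases `β`). -/
def convHidden (d : ℕ) (c : ℕ → ℕ) (f : ℕ → ℕ)
    (w : ∀ m, Fin (c (m+1)) → Fin (c m) → Fin (2 * f m + 1) → Fin (2 * f m + 1) → ℝ)
    (β : ∀ m, Fin (c (m+1)) → ℝ) :
    (m : ℕ) → (Fin (c 0) → Fin d → Fin d → ℝ) → Fin (c m) → Fin d → Fin d → ℝ
  | 0 => fun x => x
  | m+1 => fun x i a b =>
      max (convLayer (f m) d (c m) (c (m+1)) (w m) (convHidden d c f w β m x) i a b + β m i) 0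

/-- A convolutional residual block with `Q ≥ 1` convolutional layers and a shortcut connection. -/
def convBlock (d Q : ℕ) (hQ : 0 < Q) (cres : ℕ) (c : ℕ → ℕ)
    (hc0 : c 0 = cres) (hcq : c Q = cres) (f : ℕ → ℕ)
    (w : ∀ m, Fin (c (m+1)) → Fin (c m) → Fin (2 * f m + 1) → Fin (2 * f m + 1) → ℝ)
    (β : ∀ m, Fin (c (m+1)) → ℝ)
    (x : Fin cres → Fin d → Fin d → ℝ) : Fin cres → Fin d → Fin d → ℝ :=
  castChan (show c (Q-1+1) = cres from (congrArg c (Nat.succ_pred_eq_of_pos hQ)).trans hcq)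
    (fun i a b =>
      max (convLayer (f (Q-1)) d (c (Q-1)) (c (Q-1+1)) (w (Q-1))
            (convHidden d c f w β (Q-1) (castChan hc0.symm x)) i a b
          + x (Fin.cast (show c (Q-1+1) = cres from
              (congrArg c (Nat.succ_pred_eq_of_pos hQ)).trans hcq) i) a b
          + β (Q-1) i) 0)

/-- The deep convolutional ResNet without the output layer: sampling layer
`σ(x ∗ w_s + b_s)` (block `0`) followed by the convolutional residual blocks `1,…,n`. -/
def convNet (d cin cres : ℕ) (q : ℕ → ℕ) (hq : ∀ n, 0 < q n)
    (c : ℕ → ℕ → ℕ) (hc00 : c 0 0 = cin) (h01 : c 0 1 = cres)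
    (hc0 : ∀ n, 0 < n → c n 0 = cres) (hcq : ∀ n, 0 < n → c n (q n) = cres)
    (f : ℕ → ℕ → ℕ)
    (w : ∀ n m, Fin (c n (m+1)) → Fin (c n m) → Fin (2 * f n m + 1) → Fin (2 * f n m + 1) → ℝ)
    (β : ∀ n m, Fin (c n (m+1)) → ℝ) :
    ℕ → (Fin cin → Fin d → Fin d → ℝ) → Fin cres → Fin d → Fin d → ℝ
  | 0 => fun x => castChan h01 (fun i a b =>
      max (convLayer (f 0 0) d (c 0 0) (c 0 1) (w 0 0) (castChan hc00.symm x) i a b + β 0 0 i) 0)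
  | n+1 => fun x =>
      convBlock d (q (n+1)) (hq (n+1)) cres (c (n+1)) (hc0 (n+1) (Nat.succ_pos n))
        (hcq (n+1) (Nat.succ_pos n)) (f (n+1)) (w (n+1)) (β (n+1))
        (convNet d cin cres q hq c hc00 h01 hc0 hcq f w β n x)

/-- The ℓ_p norm of a vector, `p ∈ [1,∞]`. -/
def lpNorm (p : ℝ≥0∞) {ι : Type*} [Fintype ι] (x : ι → ℝ) : ℝ :=
  if p = ∞ then ⨆ i, |x i| else (∑ i, |x i| ^ p.toReal) ^ (1 / p.toReal)

/-- The matrix (operator) norm induced by the ℓ_p vector norms. -/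
def opNormP (p : ℝ≥0∞) {α β : Type*} [Fintype α] [Fintype β] (M : Matrix α β ℝ) : ℝ :=
  sSup ((fun x => lpNorm p (M.mulVec x) / lpNorm p x) '' {x : β → ℝ | x ≠ 0})

/-- Maximum absolute column sum of a matrix (the operator norm induced by ℓ₁). -/
def maxColSum {α β : Type*} [Fintype α] [Fintype β] (M : Matrix α β ℝ) : ℝ :=
  ⨆ j, ∑ i, |M i j|

/-- Maximum absolute row sum of a matrix (the operator norm induced by ℓ_∞). -/
def maxRowSum {α β : Type*} [Fintype α] [Fintype β] (M : Matrix α β ℝ) : ℝ :=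
  ⨆ i, ∑ j, |M i j|

/-- The block matrix with blocks `A i j ∈ ℝ^{r×c}`, `i < N`, `j < M`. -/
def blockMatrixOf {N M r c : ℕ} (A : Fin N → Fin M → Matrix (Fin r) (Fin c) ℝ) :
    Matrix (Fin N × Fin r) (Fin M × Fin c) ℝ :=
  fun p q => A p.1 q.1 p.2 q.2

/-- The factor `N^{(n)}_m` of Theorem 5.2: the bound of Lemma 5.1 on `‖T(w)‖_p`. -/
def Nfactor (p : ℝ≥0∞) {f cin cout : ℕ}
    (w : Fin cout → Fin cin → Fin (2*f+1) → Fin (2*f+1) → ℝ) : ℝ :=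
  (⨆ j : Fin cin, ∑ i, ∑ i', ∑ j', |w i j i' j'|) ^ ((1/p).toReal)
    * (⨆ i : Fin cout, ∑ j, ∑ i', ∑ j', |w i j i' j'|) ^ (1 - (1/p).toReal)

/-- Zero padding of a vector `x ∈ ℝ^{din}` to a vector `(x, 0) ∈ ℝ^{d}`. -/
def padVec (din d : ℕ) (x : Fin din → ℝ) : Fin d → ℝ :=
  fun i => if h : (i : ℕ) < din then x ⟨i, h⟩ else 0

/-- The matrix `[Ws  0] ∈ ℝ^{d × d}` obtained by padding `Ws ∈ ℝ^{d × din}` with zero columns. -/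
def padMat (din d : ℕ) (Ws : Matrix (Fin d) (Fin din) ℝ) : Matrix (Fin d) (Fin d) ℝ :=
  fun i j => if h : (j : ℕ) < din then Ws i ⟨j, h⟩ else 0

/-! Write `P a n` for the product of the block matrices of blocks `a, …, n` and `v k` for the
bias term of block `k`, so that `B n = ∑_{k ≤ n} P (k+1) n (v k)`. For `N ≤ n`,
`B n = P (N+1) n (B N) + ∑_{N < k ≤ n} P (k+1) n (v k)`. As `n → ∞` the first term converges
because the tail products do, while by (iii) every `P` has operator norm at most `C₁`, so the
second term is bounded by `C₁` times the tail `∑_{k > N}` of the series (i). Hence `(B n)` is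
Cauchy. -/

namespace NormFamily

variable (F : NormFamily) {m a b e : ℕ}

lemma N_zero : F.N m 0 = 0 := (F.eq_zero_iff m 0).mpr rfl

lemma N_neg (x : Fin m → ℝ) : F.N m (-x) = F.N m x := by
  simpa using F.smul_eq m (-1) x

lemma N_nonneg (x : Fin m → ℝ) : 0 ≤ F.N m x := by
  have h := F.add_le m x (-x)
  rw [add_neg_cancel, N_zero, N_neg] at h
  linarith

lemma N_pos {x : Fin m → ℝ} (hx : x ≠ 0) : 0 < F.N m x :=
  (F.N_nonneg x).lt_of_ne fun h => hx ((F.eq_zero_iff m x).mp h.symm)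

lemma N_single_pos (i : Fin m) : 0 < F.N m (Pi.single i 1) :=
  F.N_pos fun h => by simpa using congrFun h i

lemma N_sum_le {ι : Type*} (s : Finset ι) (f : ι → Fin m → ℝ) :
    F.N m (∑ i ∈ s, f i) ≤ ∑ i ∈ s, F.N m (f i) := by
  classical
  induction s using Finset.induction_on with
  | empty => simp [N_zero]
  | insert i s hi ih =>
    rw [Finset.sum_insert hi, Finset.sum_insert hi]
    exact (F.add_le m _ _).trans (by linarith)

lemma N_single_apply (x : Fin m → ℝ) (i : Fin m) :
    F.N m (Pi.single i (x i)) = |x i| * F.N m (Pi.single i 1) := by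
  rw [← F.smul_eq, ← Pi.single_smul', smul_eq_mul, mul_one]

lemma abs_apply_le (x : Fin m → ℝ) (i : Fin m) :
    |x i| ≤ F.N m x / F.N m (Pi.single i 1) := by
  rw [le_div_iff₀ (F.N_single_pos i), ← N_single_apply]
  refine F.mono m _ _ fun j => ?_
  by_cases hj : j = i
  · subst hj; simp
  · simp [hj]

lemma norm_le_mul_N (x : Fin m → ℝ) :
    ‖x‖ ≤ (∑ i, (F.N m (Pi.single i 1))⁻¹) * F.N m x := by
  have hC : 0 ≤ ∑ i : Fin m, (F.N m (Pi.single i 1))⁻¹ :=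
    Finset.sum_nonneg fun i _ => (inv_pos.mpr (F.N_single_pos i)).le
  refine (pi_norm_le_iff_of_nonneg (mul_nonneg hC (F.N_nonneg x))).mpr fun i => ?_
  calc ‖x i‖ ≤ (F.N m (Pi.single i 1))⁻¹ * F.N m x := by
        rw [Real.norm_eq_abs, inv_mul_eq_div]
        exact F.abs_apply_le x i
    _ ≤ _ := mul_le_mul_of_nonneg_right
        (Finset.single_le_sum (fun j _ => (inv_pos.mpr (F.N_single_pos j)).le)
          (Finset.mem_univ i)) (F.N_nonneg x)

lemma N_le_mul_norm (x : Fin m → ℝ) :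
    F.N m x ≤ (∑ i, F.N m (Pi.single i 1)) * ‖x‖ := by
  classical
  calc F.N m x = F.N m (∑ i, Pi.single i (x i)) := by rw [Finset.univ_sum_single]
    _ ≤ ∑ i, |x i| * F.N m (Pi.single i 1) := by
        simpa only [N_single_apply] using F.N_sum_le Finset.univ fun i => Pi.single i (x i)
    _ ≤ ∑ i, ‖x‖ * F.N m (Pi.single i 1) := by
        gcongr with i
        exacts [(F.N_single_pos i).le, norm_le_pi_norm x i]
    _ = _ := by rw [← Finset.mul_sum, mul_comm]

lemma exists_N_mulVec_le (M : Matrix (Fin a) (Fin b) ℝ) :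
    ∃ K, ∀ x, F.N a (M *ᵥ x) ≤ K * F.N b x := by
  set T := LinearMap.toContinuousLinearMap (Matrix.mulVecLin M)
  refine ⟨(∑ i, F.N a (Pi.single i 1)) * ‖T‖ * ∑ j, (F.N b (Pi.single j 1))⁻¹, fun x => ?_⟩
  have hU : 0 ≤ ∑ i : Fin a, F.N a (Pi.single i 1) :=
    Finset.sum_nonneg fun i _ => (F.N_single_pos i).le
  calc F.N a (M *ᵥ x) ≤ (∑ i, F.N a (Pi.single i 1)) * ‖T x‖ := F.N_le_mul_norm _
    _ ≤ (∑ i, F.N a (Pi.single i 1)) * (‖T‖ * ((∑ j, (F.N b (Pi.single j 1))⁻¹) * F.N b x)) :=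
        mul_le_mul_of_nonneg_left ((T.le_opNorm x).trans
          (mul_le_mul_of_nonneg_left (F.norm_le_mul_N x) (norm_nonneg T))) hU
    _ = _ := by ring

lemma op_nonneg (M : Matrix (Fin a) (Fin b) ℝ) : 0 ≤ F.op M :=
  Real.sSup_nonneg <| by
    rintro _ ⟨x, -, rfl⟩
    exact div_nonneg (F.N_nonneg _) (F.N_nonneg _)

lemma N_mulVec_le (M : Matrix (Fin a) (Fin b) ℝ) (x : Fin b → ℝ) :
    F.N a (M *ᵥ x) ≤ F.op M * F.N b x := by
  by_cases hx : x = 0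
  · simp [hx, N_zero]
  obtain ⟨K, hK⟩ := F.exists_N_mulVec_le M
  -- `sSup` of a set that is not bounded above is the junk value `0`
  have hbdd : BddAbove ((fun x => F.N a (M *ᵥ x) / F.N b x) '' {x | x ≠ 0}) := by
    refine ⟨K, ?_⟩
    rintro _ ⟨y, hy, rfl⟩
    exact (div_le_iff₀ (F.N_pos hy)).mpr (hK y)
  exact (div_le_iff₀ (F.N_pos hx)).mp (le_csSup hbdd ⟨x, hx, rfl⟩)

lemma op_le {M : Matrix (Fin a) (Fin b) ℝ} {C : ℝ} (hC : 0 ≤ C)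
    (h : ∀ x, F.N a (M *ᵥ x) ≤ C * F.N b x) : F.op M ≤ C := by
  refine Real.sSup_le ?_ hC
  rintro _ ⟨x, hx, rfl⟩
  exact (div_le_iff₀ (F.N_pos hx)).mpr (h x)

lemma op_mul_le (A : Matrix (Fin a) (Fin b) ℝ) (B : Matrix (Fin b) (Fin e) ℝ) :
    F.op (A * B) ≤ F.op A * F.op B := by
  refine F.op_le (mul_nonneg (F.op_nonneg A) (F.op_nonneg B)) fun x => ?_
  rw [← Matrix.mulVec_mulVec, mul_assoc]
  exact (F.N_mulVec_le A _).trans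
    (mul_le_mul_of_nonneg_left (F.N_mulVec_le B x) (F.op_nonneg A))

lemma op_add_le (A B : Matrix (Fin a) (Fin b) ℝ) : F.op (A + B) ≤ F.op A + F.op B := by
  refine F.op_le (add_nonneg (F.op_nonneg A) (F.op_nonneg B)) fun x => ?_
  rw [Matrix.add_mulVec, add_mul]
  exact (F.add_le a _ _).trans (add_le_add (F.N_mulVec_le A x) (F.N_mulVec_le B x))

lemma op_one_le : F.op (1 : Matrix (Fin a) (Fin a) ℝ) ≤ 1 :=
  F.op_le zero_le_one fun x => by rw [Matrix.one_mulVec, one_mul]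

@[simp]
lemma op_mcast {a' b' : ℕ} (ha : a = a') (hb : b = b') (M : Matrix (Fin a) (Fin b) ℝ) :
    F.op (mcast ha hb M) = F.op M := by
  subst ha hb
  rfl

lemma N_mulVec_le_of_isActivation {J : Matrix (Fin a) (Fin a) ℝ} (hJ : IsActivation J)
    (x : Fin a → ℝ) : F.N a (J *ᵥ x) ≤ F.N a x := by
  refine F.mono a _ _ fun i => ?_
  have hdiag : (J *ᵥ x) i = J i i * x i := by
    rw [Matrix.mulVec, dotProduct]
    exact Finset.sum_eq_single i (fun j _ hj => by rw [hJ.2 i j hj.symm, zero_mul]) (by simp)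
  rcases hJ.1 i with h | h <;> simp [hdiag, h]

lemma op_le_one_of_isActivation {J : Matrix (Fin a) (Fin a) ℝ} (hJ : IsActivation J) :
    F.op J ≤ 1 :=
  F.op_le zero_le_one fun x => (one_mul (F.N a x)).symm ▸ F.N_mulVec_le_of_isActivation hJ x

lemma N_sum_mulVec_le {ι : Type*} (s : Finset ι)
    (A : ι → Matrix (Fin a) (Fin b) ℝ) (x : ι → Fin b → ℝ) {C : ℝ}
    (hA : ∀ i ∈ s, F.op (A i) ≤ C) :
    F.N a (∑ i ∈ s, A i *ᵥ x i) ≤ C * ∑ i ∈ s, F.N b (x i) := by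
  rw [Finset.mul_sum]
  refine (F.N_sum_le s _).trans (Finset.sum_le_sum fun i hi => ?_)
  exact (F.N_mulVec_le _ _).trans
    (mul_le_mul_of_nonneg_right (hA i hi) (F.N_nonneg _))

end NormFamily

section prodSeg

variable {α : Type*} [Monoid α] (f : ℕ → α)

lemma prodSeg_of_lt {a n : ℕ} (h : n < a) : prodSeg f a n = 1 := by
  simp [prodSeg, show n + 1 - a = 0 by omega]

lemma prodSeg_self (a : ℕ) : prodSeg f a a = f a := by
  simp [prodSeg]

lemma prodSeg_mul_prodSeg {a N n : ℕ} (h₁ : a ≤ N + 1) (h₂ : N ≤ n) :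
    prodSeg f (N + 1) n * prodSeg f a N = prodSeg f a n := by
  have hrange : List.range' a (N + 1 - a) ++ List.range' (N + 1) (n - N) =
      List.range' a (n + 1 - a) := by
    simpa [show a + (N + 1 - a) = N + 1 by omega, show N + 1 - a + (n - N) = n + 1 - a by omega]
      using List.range'_append (s := a) (m := N + 1 - a) (n := n - N) (step := 1)
  rw [prodSeg, prodSeg, prodSeg, show n + 1 - (N + 1) = n - N by omega, ← hrange,
    List.reverse_append, List.map_append, List.prod_append]

lemma prodSeg_succ {a n : ℕ} (h : a ≤ n + 1) :
    prodSeg f a (n + 1) = f (n + 1) * prodSeg f a n := by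
  rw [← prodSeg_mul_prodSeg f h n.le_succ, prodSeg_self]

end prodSeg

lemma NormFamily.op_prodSeg_le (F : NormFamily) {d : ℕ} {g : ℕ → Matrix (Fin d) (Fin d) ℝ}
    {β : ℕ → ℝ} (hg : ∀ k, F.op (g k) ≤ β k) (a n : ℕ) :
    F.op (prodSeg g a n) ≤ ∏ k ∈ Finset.Icc a n, β k := by
  induction n with
  | zero =>
    rcases Nat.eq_zero_or_pos a with rfl | ha
    · simpa [prodSeg_self] using hg 0
    · simpa [prodSeg_of_lt g ha, Finset.Icc_eq_empty_of_lt ha] using F.op_one_le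
  | succ n ih =>
    by_cases ha : a ≤ n + 1
    · rw [prodSeg_succ g ha, Finset.prod_Icc_succ_top ha, mul_comm (∏ k ∈ _, β k)]
      exact (F.op_mul_le _ _).trans
        (mul_le_mul (hg _) ih (F.op_nonneg _) ((F.op_nonneg _).trans (hg _)))
    · rw [prodSeg_of_lt g (by omega), Finset.Icc_eq_empty (by omega), Finset.prod_empty]
      exact F.op_one_le

lemma sum_prodSeg_mulVec_eq {ι R : Type*} [Fintype ι] [DecidableEq ι] [CommSemiring R]
    (g : ℕ → Matrix ι ι R) (v : ℕ → ι → R) {N n : ℕ} (h : N ≤ n) :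
    ∑ k ∈ Finset.range (n + 1), prodSeg g (k + 1) n *ᵥ v k =
      prodSeg g (N + 1) n *ᵥ ∑ k ∈ Finset.range (N + 1), prodSeg g (k + 1) N *ᵥ v k +
        ∑ k ∈ Finset.Ico (N + 1) (n + 1), prodSeg g (k + 1) n *ᵥ v k := by
  rw [Finset.range_eq_Ico, ← Finset.sum_Ico_consecutive _ (Nat.zero_le (N + 1)) (by omega),
    Matrix.mulVec_sum]
  congr 1
  refine Finset.sum_congr (Finset.range_eq_Ico (a := N + 1)).symm fun k hk => ?_
  rw [Matrix.mulVec_mulVec, prodSeg_mul_prodSeg g (by simp at hk; omega) h]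

section
variable (F : NormFamily) {c : ℕ → ℕ} (W : ∀ m, Matrix (Fin (c (m+1))) (Fin (c m)) ℝ)
  {J : ∀ m, Matrix (Fin (c (m+1))) (Fin (c (m+1))) ℝ} (hJ : ∀ m, IsActivation (J m))
include hJ

lemma NormFamily.op_innerProdFrom_le (a m : ℕ) :
    F.op (innerProdFrom c W J a m) ≤ ∏ i ∈ Finset.Ico a (a + m), F.op (W i) := by
  induction m with
  | zero =>
    show F.op (1 : Matrix (Fin (c a)) (Fin (c a)) ℝ) ≤ _
    simpa using F.op_one_le
  | succ m ih =>
    have hJW : F.op (J (a + m) * W (a + m)) ≤ F.op (W (a + m)) :=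
      (F.op_mul_le _ _).trans
        (mul_le_of_le_one_left (F.op_nonneg _) (F.op_le_one_of_isActivation (hJ _)))
    show F.op (J (a + m) * W (a + m) * innerProdFrom c W J a m) ≤
      ∏ i ∈ Finset.Ico a (a + m + 1), F.op (W i)
    rw [Finset.prod_Ico_succ_top (Nat.le_add_right a m), mul_comm (∏ i ∈ _, _)]
    exact (F.op_mul_le _ _).trans (mul_le_mul hJW ih (F.op_nonneg _) (F.op_nonneg _))

lemma NormFamily.op_blockMat_le {d q : ℕ} (hq : 0 < q) (hc0 : c 0 = d) (hcq : c q = d) :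
    F.op (blockMat d q hq c hc0 hcq W J) ≤ ∏ m ∈ Finset.range q, F.op (W m) + 1 := by
  refine (F.op_add_le _ _).trans (add_le_add ?_ ?_)
  · simpa using F.op_innerProdFrom_le W hJ 0 q
  · simpa using F.op_le_one_of_isActivation (hJ _)

lemma NormFamily.N_blockBias_le {d q : ℕ} (hcq : c q = d) (b : ∀ m, Fin (c (m+1)) → ℝ) :
    F.N d (blockBias d q c hcq W b J) ≤
      ∑ m ∈ Finset.range q, (∏ m' ∈ Finset.Ico (m+1) q, F.op (W m')) * F.N (c (m+1)) (b m) := by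
  rw [blockBias, ← Finset.sum_attach (Finset.range q)
    fun m => (∏ m' ∈ Finset.Ico (m+1) q, F.op (W m')) * F.N (c (m+1)) (b m)]
  refine (F.N_sum_le _ _).trans (Finset.sum_le_sum fun m _ => (F.N_mulVec_le _ _).trans ?_)
  refine mul_le_mul ?_ (F.N_mulVec_le_of_isActivation (hJ _) _) (F.N_nonneg _)
    (Finset.prod_nonneg fun _ _ => F.op_nonneg _)
  rw [F.op_mcast]
  exact (F.op_innerProdFrom_le W hJ _ _).trans_eq
    (by rw [Nat.add_sub_cancel' (Finset.mem_range.mp m.2)])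

end

lemma cauchySeq_of_forall_dist_le {α : Type*} [PseudoMetricSpace α] {x : ℕ → α}
    {y : ℕ → ℕ → α} {δ : ℕ → ℝ} (hy : ∀ N, CauchySeq (y N)) (hδ : Tendsto δ atTop (𝓝 0))
    (hxy : ∀ N n, N ≤ n → dist (x n) (y N n) ≤ δ N) : CauchySeq x := by
  refine Metric.cauchySeq_iff.mpr fun ε hε => ?_
  obtain ⟨N, hN⟩ := (hδ.eventually (gt_mem_nhds (by positivity : 0 < ε / 3))).exists
  obtain ⟨M, hM⟩ := Metric.cauchySeq_iff.mp (hy N) (ε / 3) (by positivity)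
  refine ⟨max N M, fun m hm n hn => ?_⟩
  rw [ge_iff_le, max_le_iff] at hm hn
  calc dist (x m) (x n) ≤ dist (x m) (y N m) + dist (y N m) (y N n) + dist (y N n) (x n) :=
        dist_triangle4 _ _ _ _
    _ < ε / 3 + ε / 3 + ε / 3 := by
        gcongr
        · exact (hxy N m hm.1).trans_lt hN
        · exact hM m hm.2 n hn.2
        · exact (dist_comm (x n) _ ▸ hxy N n hn.1).trans_lt hN
    _ = ε := by ring

lemma sum_Ico_le_tsum_nat_add {s : ℕ → ℝ} (hs : Summable s) (hs0 : ∀ k, 0 ≤ s k) (N n : ℕ) :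
    ∑ k ∈ Finset.Ico N n, s k ≤ ∑' i, s (i + N) := by
  rw [Finset.sum_Ico_eq_sum_range]
  simp_rw [add_comm N]
  exact ((summable_nat_add_iff N).mpr hs).sum_le_tsum _ fun i _ => hs0 _

theorem stmt3_general (F : NormFamily)
    (d : ℕ)
    (q : ℕ → ℕ) (hq : ∀ k, 0 < q k)
    (c : ℕ → ℕ → ℕ)
    (hc0 : ∀ k, c k 0 = d) (hcq : ∀ k, c k (q k) = d)
    (W : ∀ k m, Matrix (Fin (c k (m+1))) (Fin (c k m)) ℝ)
    (b : ∀ k m, Fin (c k (m+1)) → ℝ)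
    (J : ∀ k m, Matrix (Fin (c k (m+1))) (Fin (c k (m+1))) ℝ)
    (hJ : ∀ k m, IsActivation (J k m))
    (hb : Summable fun k => ∑ m ∈ Finset.range (q k),
      (∏ m' ∈ Finset.Ico (m+1) (q k), F.op (W k m')) * F.N (c k (m+1)) (b k m))
    (htail : ∀ a : ℕ, ∃ L, Tendsto
      (fun n => prodSeg
        (fun k => blockMat d (q k) (hq k) (c k) (hc0 k) (hcq k) (W k) (J k)) a n)
      atTop (nhds L))
    (C₁ : ℝ)
    (hbd : ∀ n' n : ℕ, n' ≤ n →
      ∏ k ∈ Finset.Icc n' n, ((∏ m ∈ Finset.range (q k), F.op (W k m)) + 1) ≤ C₁) :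
    ∃ L, Tendsto (fun n => Bseq d q hq c hc0 hcq W b J n) atTop (nhds L) := by
  set g := fun k => blockMat d (q k) (hq k) (c k) (hc0 k) (hcq k) (W k) (J k)
  set s := fun k => ∑ m ∈ Finset.range (q k),
      (∏ m' ∈ Finset.Ico (m+1) (q k), F.op (W k m')) * F.N (c k (m+1)) (b k m)
  have hs0 : ∀ k, 0 ≤ s k := fun k => Finset.sum_nonneg fun m _ =>
    mul_nonneg (Finset.prod_nonneg fun _ _ => F.op_nonneg _) (F.N_nonneg _)
  have hC₁ : 1 ≤ C₁ := le_trans (by simpa using Finset.prod_nonneg fun m _ => F.op_nonneg _)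
    (hbd 0 0 le_rfl)
  have hg : ∀ a n, F.op (prodSeg g a n) ≤ C₁ := fun a n =>
    (F.op_prodSeg_le (fun k => F.op_blockMat_le _ (hJ k) _ _ _) a n).trans <| by
      rcases le_or_gt a n with h | h
      · exact hbd a n h
      · simpa [Finset.Icc_eq_empty_of_lt h] using hC₁
  set K := ∑ i : Fin d, (F.N d (Pi.single i 1))⁻¹
  refine cauchySeq_tendsto_of_complete <| cauchySeq_of_forall_dist_le
    (y := fun N n => prodSeg g (N + 1) n *ᵥ Bseq d q hq c hc0 hcq W b J N)
    (δ := fun N => K * (C₁ * ∑' i, s (i + (N + 1))))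
    (fun N => ?_) ?_ fun N n hNn => ?_
  · obtain ⟨L, hL⟩ := htail (N + 1)
    exact (((continuous_id.matrix_mulVec continuous_const).tendsto L).comp hL).cauchySeq
  · simpa using ((tendsto_sum_nat_add s).comp (tendsto_add_atTop_nat 1)).const_mul C₁
      |>.const_mul K
  · unfold Bseq
    rw [dist_eq_norm, sum_prodSeg_mulVec_eq g _ hNn, add_sub_cancel_left]
    refine (F.norm_le_mul_N _).trans (mul_le_mul_of_nonneg_left ?_ ?_)
    · refine (F.N_sum_mulVec_le _ _ _ fun k _ => hg _ _).trans (mul_le_mul_of_nonneg_left ?_ ?_)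
      · exact (Finset.sum_le_sum fun k _ => F.N_blockBias_le _ (hJ k) (hcq k) _).trans
          (sum_Ico_le_tsum_nat_add hb hs0 _ _)
      · linarith
    · exact Finset.sum_nonneg fun i _ => (inv_pos.mpr (F.N_single_pos i)).le

theorem stmt3 (F : NormFamily)
    (d : ℕ) (hd : 0 < d)
    (q : ℕ → ℕ) (hq : ∀ k, 0 < q k) (hqb : ∃ Q, ∀ k, q k ≤ Q)
    (c : ℕ → ℕ → ℕ) (hcpos : ∀ k m, m ≤ q k → 0 < c k m)
    (hc0 : ∀ k, c k 0 = d) (hcq : ∀ k, c k (q k) = d)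
    (W : ∀ k m, Matrix (Fin (c k (m+1))) (Fin (c k m)) ℝ)
    (b : ∀ k m, Fin (c k (m+1)) → ℝ)
    (J : ∀ k m, Matrix (Fin (c k (m+1))) (Fin (c k (m+1))) ℝ)
    (hJ : ∀ k m, IsActivation (J k m))
    (hb : Summable fun k => ∑ m ∈ Finset.range (q k),
      (∏ m' ∈ Finset.Ico (m+1) (q k), F.op (W k m')) * F.N (c k (m+1)) (b k m))
    (htail : ∀ a : ℕ, ∃ L, Tendsto
      (fun n => prodSeg
        (fun k => blockMat d (q k) (hq k) (c k) (hc0 k) (hcq k) (W k) (J k)) a n)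
      atTop (nhds L))
    (C₁ : ℝ) (hC₁ : 0 < C₁)
    (hbd : ∀ n' n : ℕ, n' ≤ n →
      ∏ k ∈ Finset.Icc n' n, ((∏ m ∈ Finset.range (q k), F.op (W k m)) + 1) ≤ C₁) :
    ∃ L, Tendsto (fun n => Bseq d q hq c hc0 hcq W b J n) atTop (nhds L) :=
  stmt3_general F d q hq c hc0 hcq W b J hJ hb htail C₁ hbd
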